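/- arXiv:2007.14980 — 4 statements merged into one kernel-verified Lean document; each statement's English description precedes it below -/
import Mathlib

section
/- Let X = (X₁, X₂) be a random vector with X₁ valued in ℝ^q and X₂ valued in ℝ^p, and let C ⊆ ℝ^q be a measurable set with P(X₁ ∈ C) > 0. If X₂ has probability density f_{X₂} with respect to Lebesgue measure, then the conditional distribution of X₂ given {X₁ ∈ C} has density f_Y(y) = f_{X₂}(y) · P(X₁ ∈ C | X₂ = y) / P(X₁ ∈ C). -/
open MeasureTheory ProbabilityTheory
open scoped ENNReal

/-- If `X₂` has pdf `f` (w.r.t. Lebesgue measure) and `g` is a version of the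
regular conditional probability `y ↦ P(X₁ ∈ C ∣ X₂ = y)`, then the selection distribution of
`X₂` given `{X₁ ∈ C}` has density `y ↦ f y * g y / P(X₁ ∈ C)`. -/
theorem stmt_0 {Ω : Type*} [MeasurableSpace Ω] (μ : Measure Ω) [IsProbabilityMeasure μ]
    {q p : ℕ} (X₁ : Ω → (Fin q → ℝ)) (X₂ : Ω → (Fin p → ℝ))
    (hX₁ : Measurable X₁) (hX₂ : Measurable X₂)
    (C : Set (Fin q → ℝ)) (hC : MeasurableSet C)
    (hpos : 0 < μ (X₁ ⁻¹' C))
    (f : (Fin p → ℝ) → ℝ≥0∞) (hfm : Measurable f)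
    (hf : μ.map X₂ = volume.withDensity f)
    (g : (Fin p → ℝ) → ℝ≥0∞) (hgm : Measurable g)
    -- `g` is (a version of) the regular conditional probability `P(X₁ ∈ C ∣ X₂ = y)`
    (hg : ∀ B : Set (Fin p → ℝ), MeasurableSet B →
      μ (X₁ ⁻¹' C ∩ X₂ ⁻¹' B) = ∫⁻ y in B, g y * f y) :
    (μ[|X₁ ⁻¹' C]).map X₂
      = volume.withDensity (fun y => f y * g y / μ (X₁ ⁻¹' C)) := by
  ext B hB
  rw [Measure.map_apply (hX₂.mono le_rfl le_rfl) hB,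
    cond_apply (hX₁ hC) μ, hg B hB, withDensity_apply _ hB]
  rw [← lintegral_const_mul' _ _ (by simp [hpos.ne'] : (μ (X₁ ⁻¹' C))⁻¹ ≠ ⊤)]
  congr 1
  ext y
  rw [ENNReal.div_eq_inv_mul]
  ring
end

section
/- Let X follow a univariate Student's t distribution with ν > 0 degrees of freedom, and let (a, b) be a truncation interval with a < b and at least one of a, b infinite. Then the truncated moment E[X^k | a ≤ X ≤ b] is finite if and only if k < ν. -/
open MeasureTheory

/-- The standard univariate Student's `t` density with `ν` degrees of freedom. -/
noncomputable def tDensity (ν x : ℝ) : ℝ :=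
  Real.Gamma ((ν + 1) / 2) / (Real.Gamma (ν / 2) * Real.sqrt (ν * Real.pi)) *
    (1 + x ^ 2 / ν) ^ (-(ν + 1) / 2)

section aux

open Set Real

variable {ν : ℝ} (hν : 0 < ν) (k : ℕ)

/-- the unnormalized even density-times-|x|^k -/
noncomputable def FF (ν : ℝ) (k : ℕ) (x : ℝ) : ℝ :=
  |x| ^ k * (1 + x ^ 2 / ν) ^ (-(ν + 1) / 2)

include hν

lemma base_pos (x : ℝ) : 0 < 1 + x ^ 2 / ν := by positivity

lemma FF_pos (x : ℝ) : 0 ≤ FF ν k x := by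
  have := base_pos hν x
  unfold FF; positivity

lemma FF_cont : Continuous (FF ν k) := by
  apply Continuous.mul (by fun_prop)
  apply Continuous.rpow_const (by fun_prop)
  intro x
  exact Or.inl (ne_of_gt (base_pos hν x))

omit hν in
lemma FF_even (x : ℝ) : FF ν k (-x) = FF ν k x := by
  simp [FF]

/-- upper bound on `Ioi 1` -/
lemma FF_upper {x : ℝ} (hx : 1 < x) :
    FF ν k x ≤ ν ^ ((ν + 1) / 2) * x ^ ((k : ℝ) - (ν + 1)) := by
  have hx0 : 0 < x := lt_trans one_pos hx
  have h1 : (1 + x ^ 2 / ν) ^ (-(ν + 1) / 2) ≤ (x ^ 2 / ν) ^ (-(ν + 1) / 2) := by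
    apply Real.rpow_le_rpow_of_nonpos (by positivity) (by linarith)
    have : (0:ℝ) < ν + 1 := by linarith
    linarith [div_nonneg this.le (by norm_num : (0:ℝ) ≤ 2)]
  have e1 : ((x : ℝ) ^ 2) ^ (-(ν + 1) / 2) = x ^ (-(ν + 1)) := by
    rw [← Real.rpow_natCast x 2, ← Real.rpow_mul hx0.le]
    congr 1; push_cast; ring
  have e2 : (ν : ℝ) ^ (-(ν + 1) / 2) = (ν ^ ((ν + 1) / 2))⁻¹ := by
    rw [← Real.rpow_neg hν.le]; congr 1; ring
  have h2 : (x ^ 2 / ν) ^ (-(ν + 1) / 2) = ν ^ ((ν + 1) / 2) * x ^ (-(ν + 1)) := by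
    rw [Real.div_rpow (by positivity) hν.le, e1, e2]
    field_simp
  calc FF ν k x = x ^ k * (1 + x ^ 2 / ν) ^ (-(ν + 1) / 2) := by
        rw [FF, abs_of_pos hx0]
    _ ≤ x ^ k * (ν ^ ((ν + 1) / 2) * x ^ (-(ν + 1))) := by
        rw [← h2]; exact mul_le_mul_of_nonneg_left h1 (by positivity)
    _ = ν ^ ((ν + 1) / 2) * x ^ ((k : ℝ) - (ν + 1)) := by
        rw [sub_eq_add_neg, Real.rpow_add hx0, ← Real.rpow_natCast x k]; ring

/-- lower bound on `Ioi 1` -/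
lemma FF_lower {x : ℝ} (hx : 1 < x) :
    ((ν + 1) / ν) ^ (-(ν + 1) / 2) * x ^ ((k : ℝ) - (ν + 1)) ≤ FF ν k x := by
  have hx0 : 0 < x := lt_trans one_pos hx
  have hb : 1 + x ^ 2 / ν ≤ x ^ 2 * ((ν + 1) / ν) := by
    have h1 : (1:ℝ) ≤ x ^ 2 := by nlinarith
    have : x ^ 2 * ((ν + 1) / ν) = x ^ 2 + x ^ 2 / ν := by field_simp
    rw [this]
    have : x ^ 2 / ν ≤ x ^ 2 / ν := le_refl _
    linarith
  have h1 : (x ^ 2 * ((ν + 1) / ν)) ^ (-(ν + 1) / 2) ≤ (1 + x ^ 2 / ν) ^ (-(ν + 1) / 2) := by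
    apply Real.rpow_le_rpow_of_nonpos (base_pos hν x) hb
    have : (0:ℝ) < ν + 1 := by linarith
    linarith [div_nonneg this.le (by norm_num : (0:ℝ) ≤ 2)]
  have h2 : (x ^ 2 * ((ν + 1) / ν)) ^ (-(ν + 1) / 2)
      = ((ν + 1) / ν) ^ (-(ν + 1) / 2) * x ^ (-(ν + 1)) := by
    have e1 : ((x : ℝ) ^ 2) ^ (-(ν + 1) / 2) = x ^ (-(ν + 1)) := by
      rw [← Real.rpow_natCast x 2, ← Real.rpow_mul hx0.le]
      congr 1; push_cast; ring
    rw [Real.mul_rpow (by positivity) (by positivity), mul_comm, e1]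
  have h3 : x ^ k * (x ^ 2 * ((ν + 1) / ν)) ^ (-(ν + 1) / 2)
      = ((ν + 1) / ν) ^ (-(ν + 1) / 2) * x ^ ((k : ℝ) - (ν + 1)) := by
    rw [h2, sub_eq_add_neg, Real.rpow_add hx0, ← Real.rpow_natCast x k]; ring
  calc ((ν + 1) / ν) ^ (-(ν + 1) / 2) * x ^ ((k : ℝ) - (ν + 1))
      = x ^ k * (x ^ 2 * ((ν + 1) / ν)) ^ (-(ν + 1) / 2) := h3.symm
    _ ≤ x ^ k * (1 + x ^ 2 / ν) ^ (-(ν + 1) / 2) :=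
        mul_le_mul_of_nonneg_left h1 (by positivity)
    _ = FF ν k x := by rw [FF, abs_of_pos hx0]

lemma FF_int_Ioi_one (hkν : (k : ℝ) < ν) : IntegrableOn (FF ν k) (Ioi 1) := by
  have hexp : (k : ℝ) - (ν + 1) < -1 := by linarith
  have hint : IntegrableOn (fun x : ℝ => ν ^ ((ν + 1) / 2) * x ^ ((k : ℝ) - (ν + 1))) (Ioi 1) :=
    ((integrableOn_Ioi_rpow_iff one_pos).2 hexp).const_mul _
  apply Integrable.mono' hint ((FF_cont hν k).aestronglyMeasurable.restrict)
  filter_upwards [ae_restrict_mem measurableSet_Ioi] with x hx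
  rw [Real.norm_eq_abs, abs_of_nonneg (FF_pos hν k x)]
  exact FF_upper hν k hx

lemma FF_int_Ioi_of (hkν : (k : ℝ) < ν) (r : ℝ) : IntegrableOn (FF ν k) (Ici r) := by
  have h1 : IntegrableOn (FF ν k) (Icc r 1) :=
    (FF_cont hν k).continuousOn.integrableOn_compact isCompact_Icc
  have h2 := FF_int_Ioi_one hν k hkν
  apply (h1.union h2).mono_set
  intro x hx
  rcases le_or_gt x 1 with h | h
  · exact Or.inl ⟨hx, h⟩
  · exact Or.inr h

lemma FF_not_int (hnk : ¬ (k : ℝ) < ν) (r : ℝ) : ¬ IntegrableOn (FF ν k) (Ici r) := by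
  intro hint
  set m := max r 1 with hm
  have hsub : Ioi m ⊆ Ici r := fun x hx => le_of_lt (lt_of_le_of_lt (le_max_left r 1) hx)
  have hint' : IntegrableOn (FF ν k) (Ioi m) := hint.mono_set hsub
  have hc : (0:ℝ) < ((ν + 1) / ν) ^ (-(ν + 1) / 2) := by positivity
  have hrint : IntegrableOn (fun x : ℝ => ((ν + 1) / ν) ^ (-(ν + 1) / 2)
      * x ^ ((k : ℝ) - (ν + 1))) (Ioi m) := by
    apply Integrable.mono' hint'
    · apply Measurable.aestronglyMeasurable
      fun_prop
    · filter_upwards [ae_restrict_mem measurableSet_Ioi] with x hx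
      have hx1 : 1 < x := lt_of_le_of_lt (le_max_right r 1) hx
      have hx0 : 0 < x := lt_trans one_pos hx1
      rw [Real.norm_eq_abs, abs_of_nonneg (by positivity)]
      exact FF_lower hν k hx1
  have hrint2 : IntegrableOn (fun x : ℝ => x ^ ((k : ℝ) - (ν + 1))) (Ioi m) :=
    (integrable_const_mul_iff (IsUnit.mk0 _ (ne_of_gt hc)) _).1 hrint
  have hm0 : (0:ℝ) < m := lt_of_lt_of_le one_pos (le_max_right r 1)
  rw [integrableOn_Ioi_rpow_iff hm0] at hrint2
  have : (k : ℝ) < ν := by linarith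
  exact hnk this

omit hν in
lemma FF_int_Iic_iff (r : ℝ) : IntegrableOn (FF ν k) (Iic r) ↔ IntegrableOn (FF ν k) (Ici (-r)) := by
  rw [← (Measure.measurePreserving_neg (volume : Measure ℝ)).integrableOn_comp_preimage
      (Homeomorph.neg ℝ).measurableEmbedding]
  have h1 : (fun x : ℝ => FF ν k (-x)) = FF ν k := funext fun x => FF_even k x
  have h2 : (Neg.neg ⁻¹' Iic r : Set ℝ) = Ici (-r) := by
    ext x; simp [neg_le]
  rw [show ((FF ν k) ∘ Neg.neg) = fun x => FF ν k (-x) from rfl, h1, h2]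

lemma FF_int_Ici_iff (r : ℝ) : IntegrableOn (FF ν k) (Ici r) ↔ (k : ℝ) < ν := by
  constructor
  · intro h; by_contra hn; exact FF_not_int hν k hn r h
  · intro h; exact FF_int_Ioi_of hν k h r

lemma FF_int_univ_iff : IntegrableOn (FF ν k) univ ↔ (k : ℝ) < ν := by
  constructor
  · intro h
    exact (FF_int_Ici_iff hν k 0).1 (h.mono_set (subset_univ _))
  · intro h
    have h1 : IntegrableOn (FF ν k) (Iic 0) := by
      rw [FF_int_Iic_iff k]
      exact FF_int_Ioi_of hν k h _
    have h2 := FF_int_Ioi_of hν k h 0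
    have := h1.union h2
    rwa [Iic_union_Ici] at this

end aux

/-- For a univariate Student's `t` variable with `ν > 0` degrees of freedom
truncated to `(a, b)` with `a < b` and at least one of `a, b` infinite, the truncated moment
`E[X^k ∣ a ≤ X ≤ b]` is finite iff `k < ν`. -/
theorem stmt_9 (ν : ℝ) (hν : 0 < ν) (k : ℕ) (a b : EReal) (hab : a < b)
    (hinf : a = ⊥ ∨ b = ⊤) :
    IntegrableOn (fun x : ℝ => x ^ k * tDensity ν x)
        {x : ℝ | a ≤ (x : EReal) ∧ (x : EReal) ≤ b} ↔ (k : ℝ) < ν := by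
  classical
  set C := Real.Gamma ((ν + 1) / 2) / (Real.Gamma (ν / 2) * Real.sqrt (ν * Real.pi)) with hC
  have hCpos : 0 < C := by
    apply div_pos (Real.Gamma_pos_of_pos (by linarith))
    exact mul_pos (Real.Gamma_pos_of_pos (by linarith))
      (Real.sqrt_pos.2 (mul_pos hν Real.pi_pos))
  -- reduce integrability of the target to integrability of FF on the same set
  have key : ∀ S : Set ℝ, IntegrableOn (fun x : ℝ => x ^ k * tDensity ν x) S
      ↔ IntegrableOn (FF ν k) S := by
    intro S
    have hmeas : AEStronglyMeasurable (fun x : ℝ => x ^ k * tDensity ν x)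
        (volume.restrict S) := by
      apply Continuous.aestronglyMeasurable
      apply Continuous.mul (by fun_prop)
      apply Continuous.mul continuous_const
      apply Continuous.rpow_const (by fun_prop)
      intro x
      exact Or.inl (ne_of_gt (base_pos hν x))
    have hnorm : ∀ x : ℝ, ‖x ^ k * tDensity ν x‖ = C * FF ν k x := by
      intro x
      have hb := base_pos hν x
      rw [Real.norm_eq_abs, tDensity, ← hC, abs_mul, abs_mul, FF, abs_pow,
        abs_of_pos hCpos, abs_of_pos (Real.rpow_pos_of_pos hb _)]
      ring
    constructor
    · intro h
      have h2 : Integrable (fun x => ‖x ^ k * tDensity ν x‖) (volume.restrict S) := h.norm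
      have h3 : Integrable (fun x => C * FF ν k x) (volume.restrict S) := by
        apply h2.congr
        filter_upwards with x using (hnorm x)
      exact (integrable_const_mul_iff (IsUnit.mk0 _ (ne_of_gt hCpos)) _).1 h3
    · intro h
      have h3 : Integrable (fun x => ‖x ^ k * tDensity ν x‖) (volume.restrict S) := by
        apply (h.const_mul C).congr
        filter_upwards with x using (hnorm x).symm
      exact (integrable_norm_iff hmeas).1 h3
  rcases hinf with ha | hb'
  · subst ha
    induction b using EReal.rec with
    | bot => exact absurd hab (lt_irrefl _)
    | coe r =>
      have hset : {x : ℝ | (⊥ : EReal) ≤ (x : EReal) ∧ (x : EReal) ≤ (r : EReal)}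
          = Set.Iic r := by
        ext x
        simp [EReal.coe_le_coe_iff]
      rw [hset, key, FF_int_Iic_iff k, FF_int_Ici_iff hν k]
    | top =>
      have hset : {x : ℝ | (⊥ : EReal) ≤ (x : EReal) ∧ (x : EReal) ≤ (⊤ : EReal)}
          = Set.univ := by
        ext x; simp
      rw [hset, key, FF_int_univ_iff hν k]
  · subst hb'
    induction a using EReal.rec with
    | bot =>
      have hset : {x : ℝ | (⊥ : EReal) ≤ (x : EReal) ∧ (x : EReal) ≤ (⊤ : EReal)}
          = Set.univ := by
        ext x; simp
      rw [hset, key, FF_int_univ_iff hν k]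
    | coe r =>
      have hset : {x : ℝ | (r : EReal) ≤ (x : EReal) ∧ (x : EReal) ≤ (⊤ : EReal)}
          = Set.Ici r := by
        ext x
        simp [EReal.coe_le_coe_iff]
      rw [hset, key, FF_int_Ici_iff hν k]
    | top => exact absurd hab (lt_irrefl _)
end

section
/- Let X_ν follow a univariate Student's t distribution with ν > 2 degrees of freedom, location 0 and scale 1, conditioned on a measurable set A ⊆ ℝ with positive probability. Then E[(ν + X²)/(ν − 1) | X ∈ A] = (ν/(ν−2)) · P(X' ∈ A)/P(X ∈ A), where X' follows a Student's t distribution with ν − 2 degrees of freedom and scale √(ν/(ν−2)). -/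
open MeasureTheory

lemma tDensity_key (ν : ℝ) (hν : 2 < ν) (x : ℝ) :
    (ν + x ^ 2) / (ν - 1) * tDensity ν x
      = ν / (ν - 2) *
        ((Real.sqrt (ν / (ν - 2)))⁻¹ * tDensity (ν - 2) (x / Real.sqrt (ν / (ν - 2)))) := by
  have hν0 : (0:ℝ) < ν := by linarith
  have hν2 : (0:ℝ) < ν - 2 := by linarith
  have hν1 : (0:ℝ) < ν - 1 := by linarith
  set σ := Real.sqrt (ν / (ν - 2)) with hσ
  have hσ2 : σ ^ 2 = ν / (ν - 2) := Real.sq_sqrt (by positivity)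
  have hσ0 : 0 < σ := Real.sqrt_pos.2 (by positivity)
  have harg : 1 + (x / σ) ^ 2 / (ν - 2) = 1 + x ^ 2 / ν := by
    have : (x / σ) ^ 2 = x ^ 2 / (ν / (ν - 2)) := by rw [div_pow, hσ2]
    rw [this]; field_simp
  have hb : 0 < 1 + x ^ 2 / ν := by positivity
  unfold tDensity
  rw [harg]
  have hG1 : Real.Gamma ((ν + 1) / 2) = (ν - 1) / 2 * Real.Gamma ((ν - 1) / 2) := by
    rw [show (ν + 1) / 2 = (ν - 1) / 2 + 1 by ring, Real.Gamma_add_one (by positivity)]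
  have hG2 : Real.Gamma (ν / 2) = (ν - 2) / 2 * Real.Gamma ((ν - 2) / 2) := by
    rw [show ν / 2 = (ν - 2) / 2 + 1 by ring, Real.Gamma_add_one (by positivity)]
  have hexp : (1 + x ^ 2 / ν) ^ (-(ν + 1) / 2)
      = (1 + x ^ 2 / ν) ^ (-(ν - 2 + 1) / 2) * (1 + x ^ 2 / ν)⁻¹ := by
    rw [← Real.rpow_neg_one (1 + x ^ 2 / ν), ← Real.rpow_add hb]
    congr 1; ring
  rw [hexp, hG1, hG2]
  have hsqrt : Real.sqrt (ν * Real.pi) = σ * Real.sqrt ((ν - 2) * Real.pi) := by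
    rw [hσ, ← Real.sqrt_mul (by positivity)]
    congr 1
    field_simp
  rw [hsqrt]
  have hΓ1 : Real.Gamma ((ν - 1) / 2) ≠ 0 := (Real.Gamma_pos_of_pos (by positivity)).ne'
  have hΓ2 : Real.Gamma ((ν - 2) / 2) ≠ 0 := (Real.Gamma_pos_of_pos (by positivity)).ne'
  have hπ : 0 < Real.sqrt ((ν - 2) * Real.pi) :=
    Real.sqrt_pos.2 (by positivity)
  have hx : ν + x ^ 2 = ν * (1 + x ^ 2 / ν) := by field_simp
  rw [hx]
  field_simp
  ring

/-- For `X` standard Student's `t` with `ν > 2` degrees of freedom conditioned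
on a set `A` of positive probability,
`E[(ν + X²)/(ν − 1) ∣ X ∈ A] = (ν/(ν−2)) · P(X' ∈ A)/P(X ∈ A)` where `X'` is Student's `t` with
`ν − 2` degrees of freedom and scale `√(ν/(ν−2))` (so its density is
`x ↦ σ⁻¹ t(x/σ; ν−2)` with `σ = √(ν/(ν−2))`). -/
theorem stmt_12 (ν : ℝ) (hν : 2 < ν) (A : Set ℝ) (hA : MeasurableSet A)
    (hpos : 0 < ∫ x in A, tDensity ν x) :
    (∫ x in A, (ν + x ^ 2) / (ν - 1) * tDensity ν x) / (∫ x in A, tDensity ν x)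
      = ν / (ν - 2) *
        ((∫ x in A, (Real.sqrt (ν / (ν - 2)))⁻¹ * tDensity (ν - 2) (x / Real.sqrt (ν / (ν - 2))))
          / (∫ x in A, tDensity ν x)) := by
  have h : (∫ x in A, (ν + x ^ 2) / (ν - 1) * tDensity ν x)
      = ν / (ν - 2) *
        ∫ x in A, (Real.sqrt (ν / (ν - 2)))⁻¹ * tDensity (ν - 2) (x / Real.sqrt (ν / (ν - 2))) := by
    rw [← integral_const_mul]
    exact integral_congr_ae (Filter.Eventually.of_forall fun x => tDensity_key ν hν x)
  rw [h, mul_div_assoc]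
end

section
/- For ν > 2 and all x ∈ ℝ, the following density identity holds: ((ν + x²)/(ν − 1)) · t(x; ν) = (ν/(ν − 2)) · t̃(x), where t(·; ν) is the standard Student's t density with ν degrees of freedom and t̃ is the Student's t density with ν − 2 degrees of freedom and scale parameter √(ν/(ν−2)), i.e., t̃(x) = √((ν−2)/ν) · t(x√((ν−2)/ν); ν−2). -/
open MeasureTheory

/-- For `ν > 2` and all `x ∈ ℝ`,
`((ν + x²)/(ν − 1)) · t(x; ν) = (ν/(ν − 2)) · t̃(x)` where
`t̃(x) = √((ν−2)/ν) · t(x√((ν−2)/ν); ν−2)` is the Student's `t` density with `ν − 2` degrees of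
freedom and scale `√(ν/(ν−2))`. -/
theorem stmt_13 (ν : ℝ) (hν : 2 < ν) (x : ℝ) :
    (ν + x ^ 2) / (ν - 1) * tDensity ν x
      = ν / (ν - 2) *
        (Real.sqrt ((ν - 2) / ν) * tDensity (ν - 2) (x * Real.sqrt ((ν - 2) / ν))) := by
  have hν0 : (0:ℝ) < ν := by linarith
  have hν2 : (0:ℝ) < ν - 2 := by linarith
  have hν1 : (0:ℝ) < ν - 1 := by linarith
  have hb : (0:ℝ) < 1 + x ^ 2 / ν := by positivity
  have harg : (x * Real.sqrt ((ν - 2) / ν)) ^ 2 / (ν - 2) = x ^ 2 / ν := by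
    rw [mul_pow, Real.sq_sqrt (by positivity : (0:ℝ) ≤ (ν - 2) / ν)]
    field_simp
  have hexp : -(ν - 2 + 1) / 2 = -(ν + 1) / 2 + 1 := by ring
  have hpow : (1 + x ^ 2 / ν) ^ (-(ν - 2 + 1) / 2)
      = (1 + x ^ 2 / ν) ^ (-(ν + 1) / 2) * (1 + x ^ 2 / ν) := by
    rw [hexp, Real.rpow_add hb, Real.rpow_one]
  have hG1 : Real.Gamma ((ν + 1) / 2) = (ν - 1) / 2 * Real.Gamma ((ν - 1) / 2) := by
    have : (ν + 1) / 2 = (ν - 1) / 2 + 1 := by ring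
    rw [this, Real.Gamma_add_one (by positivity)]
  have hG2 : Real.Gamma (ν / 2) = (ν - 2) / 2 * Real.Gamma ((ν - 2) / 2) := by
    have : ν / 2 = (ν - 2) / 2 + 1 := by ring
    rw [this, Real.Gamma_add_one (by positivity)]
  have hG3 : (ν - 2 + 1) / 2 = (ν - 1) / 2 := by ring
  have hs : Real.sqrt ((ν - 2) / ν) * Real.sqrt (ν * Real.pi)
      = Real.sqrt ((ν - 2) * Real.pi) := by
    rw [← Real.sqrt_mul (by positivity)]
    congr 1
    field_simp
  have hGpos1 : 0 < Real.Gamma ((ν - 1) / 2) := Real.Gamma_pos_of_pos (by positivity)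
  have hGpos2 : 0 < Real.Gamma ((ν - 2) / 2) := Real.Gamma_pos_of_pos (by positivity)
  have hsq1 : 0 < Real.sqrt (ν * Real.pi) := Real.sqrt_pos.mpr (by positivity)
  have hsq2 : 0 < Real.sqrt ((ν - 2) * Real.pi) := Real.sqrt_pos.mpr (by positivity)
  unfold tDensity
  rw [harg, hpow, hG1, hG2, hG3]
  have key : (ν + x ^ 2) * (1 + x ^ 2 / ν) = ν * (1 + x ^ 2 / ν) ^ 2 := by
    field_simp
  rw [← hs]
  have hps : (1 + x ^ 2 / ν) ^ (-(ν + 1) / 2) ≠ 0 := ne_of_gt (Real.rpow_pos_of_pos hb _)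
  field_simp
end
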